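/- Let k, ℓ > 0, let π1 ∈ T_k and π2 ∈ T_ℓ, let 1 ≤ i ≤ slmax(π2), and let a_i be the i-th left-to-right maximum of S(π2). Then the concatenated sequence τ = (S(π1))^{+(0,k,a_i)}·(S(π2))^{+(k−1,a_i+1,k)} avoids the pattern 231, i.e., there are no positions p < q < r in τ with τ(r) < τ(p) < τ(q). -/

import Mathlib

/-!
If `S l` is increasing, then `l` avoids 231: writing `l = T · m · R` with `m` maximal,
`S l = S T · S R · m` being increasing puts every entry of `T` below every entry of `R`, so no
231 straddles `m`, and by induction none lies inside `T` or `R`. This applies to `l = S π` for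
a two-stack-sortable `π`.

In `τ` each block is order-isomorphic to `S π₁`, resp. `S π₂`. The first block lies below `k`,
except for the entry `k`, which becomes `k + aᵢ` and falls between the images of the entries
`≤ aᵢ` and `> aᵢ` of `S π₂`, all of which are `≥ k`. So a 231 meeting both blocks uses `k + aᵢ`
as its `2`, followed by the images of some `y > aᵢ` and then some `z ≤ aᵢ` of `S π₂`. Since `aᵢ`
is a left-to-right maximum of `S π₂`, it comes before `y`, so `z ≠ aᵢ` and `(aᵢ, y, z)` is a 231
in `S π₂`.
-/

namespace TSP

theorem foldr_max_mem {α : Type} [LinearOrder α] (x : α) (l : List α) :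
    l.foldr max x ∈ x :: l := by
  induction l with
  | nil => simp
  | cons a t ih =>
    simp only [List.foldr_cons]
    rcases max_choice a (t.foldr max x) with h | h <;> rw [h]
    · simp
    · rcases List.mem_cons.mp ih with h' | h'
      · rw [h']; simp
      · exact List.mem_cons.mpr (Or.inr (List.mem_cons.mpr (Or.inr h')))

theorem length_takeWhile_lt {α : Type} [DecidableEq α] {m : α} {l : List α}
    (h : m ∈ l) : (l.takeWhile (· ≠ m)).length < l.length := by
  have hd : l.dropWhile (· ≠ m) ≠ [] := by
    intro hnil
    have := List.dropWhile_eq_nil_iff.mp hnil m h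
    simp at this
  have hsum : (l.takeWhile (· ≠ m)).length + (l.dropWhile (· ≠ m)).length = l.length := by
    rw [← List.length_append, List.takeWhile_append_dropWhile]
  have : 0 < (l.dropWhile (· ≠ m)).length := List.length_pos_iff.mpr hd
  omega

theorem length_tail_dropWhile_lt {α : Type} [DecidableEq α] {m : α} {l : List α}
    (h : l ≠ []) : ((l.dropWhile (· ≠ m)).tail).length < l.length := by
  have hsum : (l.takeWhile (· ≠ m)).length + (l.dropWhile (· ≠ m)).length = l.length := by
    rw [← List.length_append, List.takeWhile_append_dropWhile]
  have h2 : ((l.dropWhile (· ≠ m)).tail).length = (l.dropWhile (· ≠ m)).length - 1 :=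
    List.length_tail
  have : 0 < l.length := List.length_pos_iff.mpr h
  omega

/-- The stack-sorting operator `S`: `S(ε) = ε`, and if `A` is nonempty with
largest element `m` and `A = A_L · (m) · A_R`, then `S(A) = S(A_L) · S(A_R) · (m)`. -/
def S {α : Type} [LinearOrder α] : List α → List α
  | [] => []
  | x :: l =>
    let m := l.foldr max x
    S ((x :: l).takeWhile (· ≠ m)) ++ S (((x :: l).dropWhile (· ≠ m)).tail) ++ [m]
termination_by l => l.length
decreasing_by
  · exact length_takeWhile_lt (by rw [List.foldr_attach (f := fun a s => max a s)]; exact foldr_max_mem x l)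
  · exact length_tail_dropWhile_lt (by simp)

/-- The identity permutation `id_n = (1, 2, …, n)` as a list. -/
def idPerm (n : ℕ) : List ℕ := List.range' 1 n

/-- `l` is a permutation of `{1, …, n}` (viewed as a sequence). -/
def IsPermOf (n : ℕ) (l : List ℕ) : Prop := l.Perm (idPerm n)

/-- `l` is a two-stack sortable permutation (of `{1, …, len l}`). -/
def Is2SS (l : List ℕ) : Prop := IsPermOf l.length l ∧ S (S l) = idPerm l.length

/-- `σ^{+k}`: add `k` to every entry. -/
def shift (k : ℕ) (l : List ℕ) : List ℕ := l.map (· + k)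

/-- `σ^{+(k1,m,k2)}`: add `k1` to every entry strictly smaller than `m`, `k2` to the others. -/
def shift3 (k1 m k2 : ℕ) (l : List ℕ) : List ℕ :=
  l.map (fun a => if a < m then a + k1 else a + k2)

/-- Standardization `P(A)`: the permutation of `{1,…,len A}` in the same relative order. -/
def stand (l : List ℕ) : List ℕ := l.map (fun a => (l.filter (fun b => b ≤ a)).length)

/-- Avoidance of the pattern 231: no positions `i < j < k` with `l(k) < l(i) < l(j)`. -/
def Avoids231 (l : List ℕ) : Prop :=
  ¬ ∃ i j k, i < j ∧ j < k ∧ k < l.length ∧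
      l.getD k 0 < l.getD i 0 ∧ l.getD i 0 < l.getD j 0

/-- The list of values of the left-to-right maxima of `l`, in order. -/
def lrMaxima (l : List ℕ) : List ℕ :=
  ((List.range l.length).filter
    (fun i => (l.take i).all (fun b => b < l.getD i 0))).map (fun i => l.getD i 0)

/-- `lmax`: the number of left-to-right maxima. -/
def lmax (l : List ℕ) : ℕ :=
  (List.range l.length).countP (fun i => (l.take i).all (fun b => b < l.getD i 0))

/-- `rmax`: the number of right-to-left maxima. -/
def rmax (l : List ℕ) : ℕ :=
  (List.range l.length).countP (fun i => (l.drop (i+1)).all (fun b => b < l.getD i 0))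

/-- `asc`: the number of ascents. -/
def asc (l : List ℕ) : ℕ :=
  (List.range (l.length - 1)).countP (fun i => l.getD i 0 < l.getD (i+1) 0)

/-- `des`: the number of descents. -/
def des (l : List ℕ) : ℕ :=
  (List.range (l.length - 1)).countP (fun i => l.getD (i+1) 0 < l.getD i 0)

/-- `slmax(π)`: the number of left-to-right maxima of `S(π)`. -/
def slmax (l : List ℕ) : ℕ := lmax (S l)

/-- `sldes(π)`: the number of entries `a` that precede `a - 1` in `S(π)`. -/
def sldes (l : List ℕ) : ℕ :=
  (List.range (S l).length).countP
    (fun i => ((S l).drop (i+1)).any (fun b => b + 1 = (S l).getD i 0))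

/-- The construction `C1(π1, π2) = π1 · (k+ℓ+1) · π2^{+k}`. -/
def C1 (p1 p2 : List ℕ) : List ℕ :=
  p1 ++ (p1.length + p2.length + 1) :: shift p1.length p2

/-- The `i`-th left-to-right maximum `a_i` of `S(π2)` (1-indexed). -/
def lrm (p2 : List ℕ) (i : ℕ) : ℕ := (lrMaxima (S p2)).getD (i - 1) 0

/-- The construction `C2(π1, π2, i) = π1^{+(0,k,a_i)} · (k+ℓ+1) · π2^{+(k-1,a_i+1,k)}`. -/
def C2 (p1 p2 : List ℕ) (i : ℕ) : List ℕ :=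
  shift3 0 p1.length (lrm p2 i) p1 ++
    (p1.length + p2.length + 1) :: shift3 (p1.length - 1) (lrm p2 i + 1) p1.length p2

/-- The decomposition `D(π) = (P(π_ℓ), P(π_r))`, where `π = π_ℓ · (n) · π_r`
with `n` the largest entry of `π`. -/
def D (l : List ℕ) : List ℕ × List ℕ :=
  match l with
  | [] => ([], [])
  | x :: t =>
    let m := t.foldr max x
    (stand ((x :: t).takeWhile (· ≠ m)), stand (((x :: t).dropWhile (· ≠ m)).tail))

open scoped List

theorem exists_pair_sublist_of_sublist_map {α β : Type*} {f : β → α} {l : List β} {y z : α}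
    (h : [y, z] <+ l.map f) : ∃ y' z', [y', z'] <+ l ∧ f y' = y ∧ f z' = z := by
  obtain ⟨l', hl', heq⟩ := List.sublist_map_iff.mp h
  rcases l' with _ | ⟨y', _ | ⟨z', _ | _⟩⟩ <;> simp only [List.map_cons, List.map_nil,
    List.cons.injEq, reduceCtorEq, and_false] at heq
  exact ⟨y', z', hl', heq.1.symm, heq.2.1.symm⟩

section Pattern

variable {α : Type*} [LinearOrder α]

def Contains231 (l : List α) : Prop :=
  ∃ x y z, [x, y, z] <+ l ∧ z < x ∧ x < y

theorem Contains231.of_map {β : Type*} [LinearOrder β] {f : α → β} (hf : StrictMono f)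
    {l : List α} (h : Contains231 (l.map f)) : Contains231 l := by
  obtain ⟨x, y, z, hsub, hzx, hxy⟩ := h
  obtain ⟨l', hl', heq⟩ := List.sublist_map_iff.mp hsub
  rcases l' with _ | ⟨x', _ | ⟨y', _ | ⟨z', _ | _⟩⟩⟩ <;> simp only [List.map_cons, List.map_nil,
    List.cons.injEq, reduceCtorEq, and_false] at heq
  obtain ⟨rfl, rfl, rfl, -⟩ := heq
  exact ⟨x', y', z', hl', hf.lt_iff_lt.mp hzx, hf.lt_iff_lt.mp hxy⟩

theorem Contains231.append_cases {u v : List α} (h : Contains231 (u ++ v)) :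
    Contains231 u ∨ Contains231 v ∨
      (∃ x y z, [x, y] <+ u ∧ z ∈ v ∧ z < x ∧ x < y) ∨
      (∃ x y z, x ∈ u ∧ [y, z] <+ v ∧ z < x ∧ x < y) := by
  obtain ⟨x, y, z, hsub, hzx, hxy⟩ := h
  obtain ⟨l₁, l₂, heq, h₁, h₂⟩ := List.sublist_append_iff.mp hsub
  rcases l₁ with _ | ⟨_, _ | ⟨_, _ | ⟨_, _ | _⟩⟩⟩ <;>
    simp only [List.nil_append, List.cons_append, List.cons.injEq, reduceCtorEq, and_false] at heq
  · subst heq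
    exact .inr (.inl ⟨x, y, z, h₂, hzx, hxy⟩)
  · obtain ⟨rfl, rfl⟩ := heq
    exact .inr (.inr (.inr ⟨x, y, z, List.singleton_sublist.mp h₁, h₂, hzx, hxy⟩))
  · obtain ⟨rfl, rfl, rfl⟩ := heq
    exact .inr (.inr (.inl ⟨x, y, z, h₁, List.singleton_sublist.mp h₂, hzx, hxy⟩))
  · obtain ⟨rfl, rfl, rfl, -⟩ := heq
    exact .inl ⟨x, y, z, h₁, hzx, hxy⟩

theorem Contains231.of_cons_of_forall_le {m : α} {l : List α} (h : Contains231 (m :: l))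
    (hm : ∀ v ∈ l, v ≤ m) : Contains231 l := by
  obtain ⟨x, y, z, hsub, hzx, hxy⟩ := h
  rcases List.sublist_cons_iff.mp hsub with hsub | ⟨r, hr, hsub⟩
  · exact ⟨x, y, z, hsub, hzx, hxy⟩
  · obtain ⟨rfl, rfl⟩ := List.cons.inj hr
    exact absurd (hm y (hsub.subset (by simp))) (not_le.mpr hxy)

theorem contains231_of_sublist_of_forall_lt {p s : List α} {a y z : α} (hp : ∀ b ∈ p, b < a)
    (hnd : (p ++ a :: s).Nodup) (hyz : [y, z] <+ p ++ a :: s) (hz : z ≤ a) (hy : a < y) :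
    Contains231 (p ++ a :: s) := by
  obtain ⟨l₁, l₂, heq, h₁, h₂⟩ := List.sublist_append_iff.mp hyz
  have hyz' : [y, z] <+ a :: s := by
    rcases l₁ with _ | ⟨y', l₁⟩
    · rwa [heq]
    · obtain ⟨rfl, -⟩ := List.cons.inj (heq.trans (List.cons_append ..))
      exact absurd (hp y (h₁.subset (by simp))) (not_lt.mpr hy.le)
  have hs : [y, z] <+ s := by
    rcases List.sublist_cons_iff.mp hyz' with hs | ⟨r, hr, -⟩
    · exact hs
    · exact absurd (List.cons.inj hr).1 hy.ne'
  have ha : a ∉ s := (List.nodup_cons.mp (hnd.sublist (List.sublist_append_right _ _))).1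
  have hza : z < a := lt_of_le_of_ne hz fun h => ha (h ▸ hs.subset (by simp))
  exact ⟨a, y, z, (hs.cons_cons a).trans (List.sublist_append_right _ _), hza, hy⟩

end Pattern

theorem avoids231_of_not_contains231 {l : List ℕ} (h : ¬Contains231 l) : Avoids231 l := by
  rintro ⟨i, j, r, hij, hjr, hr, hri, hij'⟩
  have hi : i < l.length := by omega
  have hj : j < l.length := by omega
  simp only [List.getD_eq_getElem _ _ hi, List.getD_eq_getElem _ _ hj,
    List.getD_eq_getElem _ _ hr] at hri hij'
  have hsub : [l[i], l[j], l[r]] <+ l := by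
    simpa using List.map_getElem_sublist (l := l) (is := [⟨i, hi⟩, ⟨j, hj⟩, ⟨r, hr⟩])
      (by simp [hij, hjr, hij.trans hjr])
  exact h ⟨_, _, _, hsub, hri, hij'⟩

section StackSort

variable {α : Type} [LinearOrder α]

theorem le_foldr_max (x : α) (l : List α) : ∀ v ∈ x :: l, v ≤ l.foldr max x := by
  induction l <;> simp_all

theorem dropWhile_ne_eq_cons_tail {m : α} {l : List α} (h : m ∈ l) :
    l.dropWhile (· ≠ m) = m :: (l.dropWhile (· ≠ m)).tail := by
  have hne : l.dropWhile (· ≠ m) ≠ [] := fun h' => by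
    simpa using List.dropWhile_eq_nil_iff.mp h' m h
  have hhead : (l.dropWhile (· ≠ m)).head hne = m := by
    simpa using List.head_dropWhile_not (fun b => decide (b ≠ m)) hne
  conv_lhs => rw [← List.cons_head_tail hne, hhead]

theorem S_induction {motive : List α → Prop} (nil : motive [])
    (split : ∀ T m R, (∀ v ∈ T ++ m :: R, v ≤ m) → S (T ++ m :: R) = S T ++ S R ++ [m] →
      motive T → motive R → motive (T ++ m :: R)) (l : List α) : motive l := by
  induction h : l.length using Nat.strong_induction_on generalizing l with
  | _ n ih =>
    rcases l with _ | ⟨x, t⟩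
    · exact nil
    set m := t.foldr max x
    set T := (x :: t).takeWhile (· ≠ m)
    set R := ((x :: t).dropWhile (· ≠ m)).tail
    have hl : x :: t = T ++ m :: R := by
      rw [← dropWhile_ne_eq_cons_tail (foldr_max_mem x t), List.takeWhile_append_dropWhile]
    have hS : S (x :: t) = S T ++ S R ++ [m] := by rw [S]
    have hmax := le_foldr_max x t
    have hlen : T.length + R.length + 1 = n := by
      rw [← h, hl, List.length_append, List.length_cons]; omega
    rw [hl] at hmax hS ⊢
    exact split T m R hmax hS (ih _ (by omega) T rfl) (ih _ (by omega) R rfl)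

theorem S_perm (l : List α) : S l ~ l := by
  induction l using S_induction with
  | nil => rw [S]
  | split T m R _ hS ihT ihR =>
    rw [hS]
    calc S T ++ S R ++ [m] ~ T ++ R ++ [m] := (ihT.append ihR).append_right _
      _ ~ T ++ m :: R := List.perm_append_singleton _ _ |>.trans List.perm_middle.symm

theorem not_contains231_of_pairwise_S (l : List α) (h : (S l).Pairwise (· < ·)) :
    ¬Contains231 l := by
  induction l using S_induction with
  | nil => rintro ⟨x, y, z, hsub, -⟩; simp at hsub
  | split T m R hmax hS ihT ihR =>
    rw [hS, List.pairwise_append, List.pairwise_append] at h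
    obtain ⟨⟨hT, hR, hTR⟩, -⟩ := h
    have hsplit : ∀ x ∈ T, ∀ z ∈ m :: R, ¬z < x := by
      intro x hx z hz hzx
      rcases List.mem_cons.mp hz with rfl | hz
      · exact not_le.mpr hzx (hmax x (List.mem_append_left _ hx))
      · exact lt_asymm hzx (hTR x ((S_perm T).mem_iff.mpr hx) z ((S_perm R).mem_iff.mpr hz))
    intro hc
    rcases hc.append_cases with hc | hc | ⟨x, y, z, hxy, hz, hzx, -⟩ | ⟨x, y, z, hx, hyz, hzx, -⟩
    · exact ihT hT hc
    · exact ihR hR (hc.of_cons_of_forall_le fun v hv => hmax v (by simp [hv]))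
    · exact hsplit x (hxy.subset (by simp)) z hz hzx
    · exact hsplit x hx z (hyz.subset (by simp)) hzx

end StackSort

theorem lmax_eq_length_lrMaxima (l : List ℕ) : lmax l = (lrMaxima l).length := by
  rw [lmax, lrMaxima, List.length_map, List.countP_eq_length_filter]

theorem lrm_mem_lrMaxima {π : List ℕ} {i : ℕ} (hi1 : 1 ≤ i) (hi2 : i ≤ slmax π) :
    lrm π i ∈ lrMaxima (S π) := by
  rw [slmax, lmax_eq_length_lrMaxima] at hi2
  rw [lrm, List.getD_eq_getElem _ _ (by omega)]
  exact List.getElem_mem _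

theorem exists_eq_append_cons_of_mem_lrMaxima {l : List ℕ} {a : ℕ} (h : a ∈ lrMaxima l) :
    ∃ p s, l = p ++ a :: s ∧ ∀ b ∈ p, b < a := by
  obtain ⟨t, ht, rfl⟩ := List.mem_map.mp h
  obtain ⟨htr, hmax⟩ := List.mem_filter.mp ht
  have htl : t < l.length := List.mem_range.mp htr
  refine ⟨l.take t, l.drop (t + 1), ?_, fun b hb => ?_⟩
  · rw [List.getD_eq_getElem _ _ htl, ← List.drop_eq_getElem_cons htl, List.take_append_drop]
  · simpa using List.all_eq_true.mp hmax b hb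

namespace Is2SS

variable {π : List ℕ}

theorem perm_S (h : Is2SS π) : S π ~ idPerm π.length := (S_perm π).trans h.1

theorem mem_S (h : Is2SS π) {v : ℕ} (hv : v ∈ S π) : 1 ≤ v ∧ v ≤ π.length := by
  have := List.mem_range'_1.mp (h.perm_S.subset hv)
  omega

theorem nodup_S (h : Is2SS π) : (S π).Nodup := h.perm_S.nodup_iff.mpr (List.nodup_range' ..)

theorem not_contains231_S (h : Is2SS π) : ¬Contains231 (S π) :=
  not_contains231_of_pairwise_S _ (by rw [h.2]; exact List.pairwise_lt_range' ..)

end Is2SS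

theorem Contains231.of_shift3 {k₁ m k₂ : ℕ} {l : List ℕ} (hk : k₁ ≤ k₂)
    (h : Contains231 (shift3 k₁ m k₂ l)) : Contains231 l :=
  h.of_map fun x y hxy => by split_ifs <;> omega

theorem not_contains231_shift3_append {k a : ℕ} {w₁ w₂ p s : List ℕ}
    (h₁ : ¬Contains231 w₁) (h₂ : ¬Contains231 w₂) (hw₁ : ∀ v ∈ w₁, v ≤ k)
    (hw₂ : ∀ v ∈ w₂, 1 ≤ v) (hnd : w₂.Nodup) (hsplit : w₂ = p ++ a :: s) (hp : ∀ b ∈ p, b < a) :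
    ¬Contains231 (shift3 0 k a w₁ ++ shift3 (k - 1) (a + 1) k w₂) := by
  intro h
  rcases h.append_cases with h | h | ⟨x, y, z, hsub, hz, hzx, hxy⟩ | ⟨x, y, z, hx, hsub, hzx, hxy⟩
  · exact h₁ (h.of_shift3 (Nat.zero_le _))
  · exact h₂ (h.of_shift3 (Nat.sub_le _ _))
  · obtain ⟨x', y', hl', rfl, rfl⟩ := exists_pair_sublist_of_sublist_map hsub
    obtain ⟨z', hz', rfl⟩ := List.mem_map.mp hz
    have hx' := hw₁ x' (hl'.subset (by simp))
    have hy' := hw₁ y' (hl'.subset (by simp))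
    have hz'_pos := hw₂ z' hz'
    split_ifs at hzx hxy <;> omega
  · obtain ⟨x', hx', rfl⟩ := List.mem_map.mp hx
    obtain ⟨y', z', hl', rfl, rfl⟩ := exists_pair_sublist_of_sublist_map hsub
    have hx'_le := hw₁ x' hx'
    have hz'_pos := hw₂ z' (hl'.subset (by simp))
    have hya : z' ≤ a ∧ a < y' := by split_ifs at hzx hxy <;> omega
    subst hsplit
    exact h₂ (contains231_of_sublist_of_forall_lt hp hnd hl' hya.1 hya.2)

theorem tau_avoids231_general (k : ℕ) (π1 π2 : List ℕ)
    (h1 : π1.length = k) (h1' : Is2SS π1) (h2' : Is2SS π2)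
    (i : ℕ) (hi1 : 1 ≤ i) (hi2 : i ≤ slmax π2) (a : ℕ) (ha : a = lrm π2 i) :
    Avoids231 (shift3 0 k a (S π1) ++ shift3 (k - 1) (a + 1) k (S π2)) := by
  obtain ⟨p, s, hsplit, hp⟩ :=
    exists_eq_append_cons_of_mem_lrMaxima (ha ▸ lrm_mem_lrMaxima hi1 hi2)
  refine avoids231_of_not_contains231 (not_contains231_shift3_append h1'.not_contains231_S
    h2'.not_contains231_S (fun v hv => ?_) (fun v hv => (h2'.mem_S hv).1) h2'.nodup_S hsplit hp)
  exact h1 ▸ (h1'.mem_S hv).2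

/-- For `k, ℓ > 0`, `π1 ∈ T_k`, `π2 ∈ T_ℓ`, `1 ≤ i ≤ slmax(π2)` and `a_i`
the `i`-th left-to-right maximum of `S(π2)`, the concatenation
`τ = (S(π1))^{+(0,k,a_i)} · (S(π2))^{+(k−1,a_i+1,k)}` avoids the pattern 231. -/
theorem tau_avoids231 (k ℓ : ℕ) (hk : 0 < k) (hℓ : 0 < ℓ) (π1 π2 : List ℕ)
    (h1 : π1.length = k) (h1' : Is2SS π1) (h2 : π2.length = ℓ) (h2' : Is2SS π2)
    (i : ℕ) (hi1 : 1 ≤ i) (hi2 : i ≤ slmax π2) (a : ℕ) (ha : a = lrm π2 i) :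
    Avoids231 (shift3 0 k a (S π1) ++ shift3 (k - 1) (a + 1) k (S π2)) :=
  tau_avoids231_general k π1 π2 h1 h1' h2' i hi1 hi2 a ha

end TSP
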